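/- (Dunkl-SUSY eigenfunctions for the 3d oscillator.) Let s > 0, α > −1, n ≥ 1 an integer, and define on ℝ \ {0}: ψ±(x) = |s·x|^{α+1/2}·e^{−s²x²/2}·( L_n^{(α)}(s²x²) ∓ (1/√n)·s·x·L_{n−1}^{(α+1)}(s²x²) ). Then for every x ≠ 0, d/dx[ψ±(−x)] + (s²x − (α+1/2)/x)·ψ±(x) = ±2s√n · ψ±(x); that is, ψ± are eigenfunctions on ℝ \ {0} of the Dunkl operator L_v with v(x) = s²x − (α+1/2)/x, with eigenvalues ±2s√n. -/

import Mathlib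

/-!
Write `ψ = φ · g` with the ground state `φ y = |s y|^(α+1/2) e^(-s²y²/2)`: it is even and
`φ' = -v φ`, so the Dunkl operator acts as `L_v (φ g)(x) = φ x · (v x · (g x - g (-x)) - g' (-x))`.
For `g = L_n^(α)(s²y²) ± n^(-1/2) s y L_{n-1}^(α+1)(s²y²)` the eigenvalue equation then splits into
its even and odd parts, which are the derivative formula `(L_{m+1}^(α))' = -L_m^(α+1)` and the
ladder relation `(α + 1 - u) L_m^(α+1) + u (L_m^(α+1))' = (m + 1) L_{m+1}^(α)`; both follow
from the three-term recurrence together with `L_{m+1}^(α+1) = L_{m+1}^(α) + L_m^(α+1)`.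
-/

/-- Generalized Laguerre polynomials: `L₀^{(α)} = 1`, `L₁^{(α)}(x) = 1 + α - x`,
`n·L_n^{(α)}(x) = (2n-1+α-x)·L_{n-1}^{(α)}(x) - (n-1+α)·L_{n-2}^{(α)}(x)`. -/
noncomputable def laguerre (α : ℝ) : ℕ → ℝ → ℝ
  | 0 => fun _ => 1
  | 1 => fun x => 1 + α - x
  | (n + 2) => fun x =>
      ((2 * ((n : ℝ) + 2) - 1 + α - x) * laguerre α (n + 1) x
        - (((n : ℝ) + 2) - 1 + α) * laguerre α n x) / ((n : ℝ) + 2)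

open Real

section Laguerre

variable (α : ℝ)

lemma add_two_mul_laguerre_add_two (n : ℕ) (x : ℝ) :
    ((n : ℝ) + 2) * laguerre α (n + 2) x
      = (2 * n + 3 + α - x) * laguerre α (n + 1) x - (n + 1 + α) * laguerre α n x := by
  rw [laguerre, mul_div_cancel₀ _ (by positivity)]
  ring

private lemma laguerre_param_succ_and_succ_mul (m : ℕ) (x : ℝ) :
    laguerre (α + 1) (m + 1) x = laguerre α (m + 1) x + laguerre (α + 1) m x ∧
    ((m : ℝ) + 1) * laguerre α (m + 1) x
      = (m + 1 + α) * laguerre α m x - x * laguerre (α + 1) m x := by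
  induction m with
  | zero =>
    simp only [laguerre]
    constructor <;> ring
  | succ m ih =>
    obtain ⟨hA, hB⟩ := ih
    have h := add_two_mul_laguerre_add_two α m x
    have h' := add_two_mul_laguerre_add_two (α + 1) m x
    push_cast
    constructor
    · apply mul_left_cancel₀ (by positivity : (m : ℝ) + 2 ≠ 0)
      linear_combination h' - h + (m + 2 + α - x) * hA - hB
    · linear_combination h + x * hA + hB

lemma laguerre_param_add_one_succ (m : ℕ) (x : ℝ) :
    laguerre (α + 1) (m + 1) x = laguerre α (m + 1) x + laguerre (α + 1) m x :=
  (laguerre_param_succ_and_succ_mul α m x).1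

lemma succ_mul_laguerre_succ (m : ℕ) (x : ℝ) :
    ((m : ℝ) + 1) * laguerre α (m + 1) x
      = (m + 1 + α) * laguerre α m x - x * laguerre (α + 1) m x :=
  (laguerre_param_succ_and_succ_mul α m x).2

variable {α} in
lemma HasDerivAt.laguerre_add_two {n : ℕ} {x d₀ d₁ : ℝ} (h₀ : HasDerivAt (laguerre α n) d₀ x)
    (h₁ : HasDerivAt (laguerre α (n + 1)) d₁ x) :
    HasDerivAt (laguerre α (n + 2))
      (((2 * n + 3 + α - x) * d₁ - laguerre α (n + 1) x - (n + 1 + α) * d₀) / (n + 2)) x := by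
  have hfun : laguerre α (n + 2) = fun y =>
      ((2 * n + 3 + α - y) * laguerre α (n + 1) y - (n + 1 + α) * laguerre α n y) / (n + 2) := by
    funext y
    rw [eq_div_iff (by positivity), mul_comm, add_two_mul_laguerre_add_two]
  rw [hfun]
  refine ((((hasDerivAt_id x).const_sub _).mul h₁).sub (h₀.const_mul _)).div_const _
    |>.congr_deriv ?_
  simp only [id]
  ring

lemma hasDerivAt_laguerre_one (x : ℝ) : HasDerivAt (laguerre α 1) (-1) x :=
  (hasDerivAt_id x).const_sub (1 + α)

lemma hasDerivAt_laguerre_succ (n : ℕ) (x : ℝ) :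
    HasDerivAt (laguerre α (n + 1)) (-laguerre (α + 1) n x) x := by
  induction n using Nat.twoStepInduction with
  | zero => exact hasDerivAt_laguerre_one α x
  | one =>
    have h₀ : HasDerivAt (laguerre α 0) 0 x := hasDerivAt_const x 1
    refine (h₀.laguerre_add_two (hasDerivAt_laguerre_one α x)).congr_deriv ?_
    simp only [laguerre]
    push_cast
    ring
  | more n ih₀ ih₁ =>
    refine (ih₀.laguerre_add_two ih₁).congr_deriv ?_
    have hA := laguerre_param_add_one_succ α (n + 1) x
    have h := add_two_mul_laguerre_add_two (α + 1) n x
    rw [div_eq_iff (by positivity)]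
    simp only [show n + 1 + 1 = n + 2 from rfl] at hA ⊢
    push_cast at hA h ⊢
    linear_combination hA + h

lemma differentiable_laguerre : ∀ n : ℕ, Differentiable ℝ (laguerre α n)
  | 0 => differentiable_const 1
  | n + 1 => fun x => (hasDerivAt_laguerre_succ α n x).differentiableAt

lemma laguerre_ladder (m : ℕ) (u : ℝ) :
    (α + 1 - u) * laguerre (α + 1) m u + u * deriv (laguerre (α + 1) m) u
      = (m + 1) * laguerre α (m + 1) u := by
  cases m with
  | zero =>
    rw [show laguerre (α + 1) 0 = fun _ => 1 from rfl, deriv_const]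
    simp only [laguerre]
    push_cast
    ring
  | succ k =>
    rw [(hasDerivAt_laguerre_succ (α + 1) k u).deriv]
    have hA := laguerre_param_add_one_succ α k u
    have hB := succ_mul_laguerre_succ α (k + 1) u
    have hB' := succ_mul_laguerre_succ (α + 1) k u
    push_cast at hB ⊢
    linear_combination -hB - hB' + (k + 2 + α) * hA

end Laguerre

noncomputable def dunkl (v f : ℝ → ℝ) (x : ℝ) : ℝ := deriv (f ∘ Neg.neg) x + v x * f x

lemma dunkl_mul_of_hasDerivAt {v φ g : ℝ → ℝ} {x g' : ℝ} (hφ : HasDerivAt φ (v x * φ x) (-x))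
    (hφ_neg : φ (-x) = φ x) (hg : HasDerivAt g g' (-x)) :
    dunkl v (fun y => φ y * g y) x = φ x * (v x * (g x - g (-x)) - g') := by
  rw [dunkl, ((hφ.fun_mul hg).comp x (hasDerivAt_neg x)).deriv, hφ_neg]
  ring

lemma hasDerivAt_abs_rpow_of_ne_zero (p : ℝ) {t : ℝ} (ht : t ≠ 0) :
    HasDerivAt (fun t => |t| ^ p) (p / t * |t| ^ p) t := by
  refine ((hasDerivAt_abs ht).rpow_const (Or.inl (abs_ne_zero.mpr ht))).congr_deriv ?_
  rw [rpow_sub_one (abs_ne_zero.mpr ht)]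
  rcases ht.lt_or_gt with ht | ht
  · rw [sign_neg ht, abs_of_neg ht]
    field_simp
    simp
  · rw [sign_pos ht, abs_of_pos ht]
    field_simp
    simp

noncomputable def oscillatorGroundState (s β y : ℝ) : ℝ := |s * y| ^ β * exp (-(s ^ 2 * y ^ 2) / 2)

lemma oscillatorGroundState_neg (s β y : ℝ) :
    oscillatorGroundState s β (-y) = oscillatorGroundState s β y := by
  simp only [oscillatorGroundState, mul_neg, abs_neg, neg_sq]

lemma hasDerivAt_oscillatorGroundState {s y : ℝ} (β : ℝ) (hs : s ≠ 0) (hy : y ≠ 0) :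
    HasDerivAt (oscillatorGroundState s β)
      ((β / y - s ^ 2 * y) * oscillatorGroundState s β y) y := by
  have hpow := (hasDerivAt_abs_rpow_of_ne_zero β (mul_ne_zero hs hy)).comp y
    ((hasDerivAt_id y).const_mul s)
  have hexp := (((hasDerivAt_pow 2 y).const_mul (s ^ 2)).fun_neg.div_const 2).exp
  refine (hpow.mul hexp).congr_deriv ?_
  simp only [oscillatorGroundState, Function.comp]
  field_simp
  ring

theorem dunkl_oscillatorGroundState_mul_laguerre {s c : ℝ} (α : ℝ) (m : ℕ) (hs : s ≠ 0)
    (hc : c ^ 2 * (m + 1) = 1) {x : ℝ} (hx : x ≠ 0) :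
    dunkl (fun x => s ^ 2 * x - (α + 1 / 2) / x)
      (fun y => oscillatorGroundState s (α + 1 / 2) y *
        (laguerre α (m + 1) (s ^ 2 * y ^ 2) + c * (s * y) * laguerre (α + 1) m (s ^ 2 * y ^ 2))) x
      = -(2 * s * (m + 1) * c) * (oscillatorGroundState s (α + 1 / 2) x *
        (laguerre α (m + 1) (s ^ 2 * x ^ 2)
          + c * (s * x) * laguerre (α + 1) m (s ^ 2 * x ^ 2))) := by
  set M := laguerre (α + 1) m
  have hsq : HasDerivAt (fun y => s ^ 2 * y ^ 2) (-(2 * s ^ 2 * x)) (-x) :=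
    ((hasDerivAt_pow 2 (-x)).const_mul (s ^ 2)).congr_deriv (by simp; ring)
  have hEven := (hasDerivAt_laguerre_succ α m _).comp (-x) hsq
  have hOdd := (((hasDerivAt_id (-x)).const_mul s).const_mul c).mul
    (((differentiable_laguerre (α + 1) m _).hasDerivAt).comp (-x) hsq)
  have hg : HasDerivAt
      (fun y => laguerre α (m + 1) (s ^ 2 * y ^ 2) + c * (s * y) * M (s ^ 2 * y ^ 2))
      (2 * s ^ 2 * x * M (s ^ 2 * x ^ 2)
        + c * s * (M (s ^ 2 * x ^ 2) + 2 * (s ^ 2 * x ^ 2) * deriv M (s ^ 2 * x ^ 2))) (-x) :=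
    (hEven.add hOdd).congr_deriv (by simp; ring)
  set φ := oscillatorGroundState s (α + 1 / 2)
  have hφ : HasDerivAt φ ((s ^ 2 * x - (α + 1 / 2) / x) * φ x) (-x) := by
    convert hasDerivAt_oscillatorGroundState (α + 1 / 2) hs (neg_ne_zero.mpr hx) using 1
    rw [oscillatorGroundState_neg]
    ring
  rw [dunkl_mul_of_hasDerivAt hφ (oscillatorGroundState_neg ..) hg]
  simp only [neg_sq]
  linear_combination (-2 * c * s * φ x) * laguerre_ladder α m (s ^ 2 * x ^ 2)
    + (2 * s ^ 2 * x * M (s ^ 2 * x ^ 2) * φ x) * hc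
    - ((2 * α + 1) * c * s * M (s ^ 2 * x ^ 2) * φ x) * inv_mul_cancel₀ hx

theorem dunkl_susy_3d_oscillator_general (s α : ℝ) (hs : 0 < s)
    (n : ℕ) (hn : 1 ≤ n) :
    (∀ x : ℝ, x ≠ 0 →
      deriv ((fun y => |s * y| ^ (α + 1 / 2) * Real.exp (-(s ^ 2 * y ^ 2) / 2) *
          (laguerre α n (s ^ 2 * y ^ 2)
            - (1 / Real.sqrt n) * (s * y) * laguerre (α + 1) (n - 1) (s ^ 2 * y ^ 2))) ∘
          Neg.neg) x
        + (s ^ 2 * x - (α + 1 / 2) / x) * (|s * x| ^ (α + 1 / 2) *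
            Real.exp (-(s ^ 2 * x ^ 2) / 2) *
          (laguerre α n (s ^ 2 * x ^ 2)
            - (1 / Real.sqrt n) * (s * x) * laguerre (α + 1) (n - 1) (s ^ 2 * x ^ 2)))
      = 2 * s * Real.sqrt n * (|s * x| ^ (α + 1 / 2) * Real.exp (-(s ^ 2 * x ^ 2) / 2) *
          (laguerre α n (s ^ 2 * x ^ 2)
            - (1 / Real.sqrt n) * (s * x) * laguerre (α + 1) (n - 1) (s ^ 2 * x ^ 2)))) ∧
    (∀ x : ℝ, x ≠ 0 →
      deriv ((fun y => |s * y| ^ (α + 1 / 2) * Real.exp (-(s ^ 2 * y ^ 2) / 2) *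
          (laguerre α n (s ^ 2 * y ^ 2)
            + (1 / Real.sqrt n) * (s * y) * laguerre (α + 1) (n - 1) (s ^ 2 * y ^ 2))) ∘
          Neg.neg) x
        + (s ^ 2 * x - (α + 1 / 2) / x) * (|s * x| ^ (α + 1 / 2) *
            Real.exp (-(s ^ 2 * x ^ 2) / 2) *
          (laguerre α n (s ^ 2 * x ^ 2)
            + (1 / Real.sqrt n) * (s * x) * laguerre (α + 1) (n - 1) (s ^ 2 * x ^ 2)))
      = -(2 * s * Real.sqrt n) * (|s * x| ^ (α + 1 / 2) * Real.exp (-(s ^ 2 * x ^ 2) / 2) *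
          (laguerre α n (s ^ 2 * x ^ 2)
            + (1 / Real.sqrt n) * (s * x) * laguerre (α + 1) (n - 1) (s ^ 2 * x ^ 2)))) := by
  obtain ⟨m, rfl⟩ := Nat.exists_eq_add_of_le' hn
  set r := √((m + 1 : ℕ) : ℝ)
  have hr : r ^ 2 = m + 1 := by
    rw [sq_sqrt (by positivity)]
    push_cast
    rfl
  have hc : (1 / r) ^ 2 * (m + 1) = 1 := by
    rw [div_pow, hr]
    field_simp
  have hscale : 2 * s * (m + 1) * (1 / r) = 2 * s * r := by
    rw [← hr]
    field_simp
  refine ⟨fun x hx => ?_, fun x hx => ?_⟩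
  · have h := dunkl_oscillatorGroundState_mul_laguerre α m hs.ne' (c := -(1 / r))
      (by rwa [neg_sq]) hx
    simp only [dunkl, oscillatorGroundState, neg_mul, ← sub_eq_add_neg, mul_neg, neg_neg,
      hscale] at h
    simpa only [Nat.add_sub_cancel] using h
  · have h := dunkl_oscillatorGroundState_mul_laguerre α m hs.ne' hc hx
    simp only [dunkl, oscillatorGroundState, hscale] at h
    simpa only [Nat.add_sub_cancel] using h

/-- Dunkl-SUSY eigenfunctions for the 3d oscillator: on `ℝ \ {0}`, the functions
`ψ±(x) = |sx|^{α+1/2} e^{-s²x²/2}(L_n^{(α)}(s²x²) ∓ (1/√n)·sx·L_{n-1}^{(α+1)}(s²x²))`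
satisfy `L_v ψ± = ±2s√n·ψ±` for `v(x) = s²x - (α+1/2)/x`. -/
theorem dunkl_susy_3d_oscillator (s α : ℝ) (hs : 0 < s) (hα : -1 < α)
    (n : ℕ) (hn : 1 ≤ n) :
    (∀ x : ℝ, x ≠ 0 →
      deriv ((fun y => |s * y| ^ (α + 1 / 2) * Real.exp (-(s ^ 2 * y ^ 2) / 2) *
          (laguerre α n (s ^ 2 * y ^ 2)
            - (1 / Real.sqrt n) * (s * y) * laguerre (α + 1) (n - 1) (s ^ 2 * y ^ 2))) ∘
          Neg.neg) x
        + (s ^ 2 * x - (α + 1 / 2) / x) * (|s * x| ^ (α + 1 / 2) *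
            Real.exp (-(s ^ 2 * x ^ 2) / 2) *
          (laguerre α n (s ^ 2 * x ^ 2)
            - (1 / Real.sqrt n) * (s * x) * laguerre (α + 1) (n - 1) (s ^ 2 * x ^ 2)))
      = 2 * s * Real.sqrt n * (|s * x| ^ (α + 1 / 2) * Real.exp (-(s ^ 2 * x ^ 2) / 2) *
          (laguerre α n (s ^ 2 * x ^ 2)
            - (1 / Real.sqrt n) * (s * x) * laguerre (α + 1) (n - 1) (s ^ 2 * x ^ 2)))) ∧
    (∀ x : ℝ, x ≠ 0 →
      deriv ((fun y => |s * y| ^ (α + 1 / 2) * Real.exp (-(s ^ 2 * y ^ 2) / 2) *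
          (laguerre α n (s ^ 2 * y ^ 2)
            + (1 / Real.sqrt n) * (s * y) * laguerre (α + 1) (n - 1) (s ^ 2 * y ^ 2))) ∘
          Neg.neg) x
        + (s ^ 2 * x - (α + 1 / 2) / x) * (|s * x| ^ (α + 1 / 2) *
            Real.exp (-(s ^ 2 * x ^ 2) / 2) *
          (laguerre α n (s ^ 2 * x ^ 2)
            + (1 / Real.sqrt n) * (s * x) * laguerre (α + 1) (n - 1) (s ^ 2 * x ^ 2)))
      = -(2 * s * Real.sqrt n) * (|s * x| ^ (α + 1 / 2) * Real.exp (-(s ^ 2 * x ^ 2) / 2) *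
          (laguerre α n (s ^ 2 * x ^ 2)
            + (1 / Real.sqrt n) * (s * x) * laguerre (α + 1) (n - 1) (s ^ 2 * x ^ 2)))) :=
  dunkl_susy_3d_oscillator_general s α hs n hn
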